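/- Let T be a MUL-tree with more than one leaf and F1(T) = {T_l, T_r} its depth-1 forest. Let B′ be a beaded tree that weakly displays both T_l and T_r, with root r and child a of r, and let B be the beaded tree obtained from B′ by deleting the edge ra, adding a new bead (u,v) (two new nodes u, v with two parallel edges from u to v), and adding edges ru and va. Then B weakly displays T. -/

import Mathlib

/-!
Common formal framework for MUL-trees, phylogenetic networks, beaded trees,
duplication trees, weak embeddings and related operations, following
van Iersel, Janssen, Jones, Murakami, Zeh,
"Polynomial-Time Algorithms for Phylogenetic Inference Problems involving
duplication and reticulation".

All graphs are directed multigraphs on natural-number vertices, given by a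
finite vertex set, an edge-multiplicity function and a (partial) leaf
labelling by species (also natural numbers).
-/

open scoped Classical

structure DG where
  verts : Finset ℕ
  mult : ℕ → ℕ → ℕ
  label : ℕ → Option ℕ

namespace DG

/-- An arc is a pair of endpoints together with the index of the parallel copy. -/
abbrev Arc := ℕ × ℕ × ℕ

def Adj (G : DG) (u v : ℕ) : Prop := 0 < G.mult u v

def outDeg (G : DG) (u : ℕ) : ℕ := ∑ v ∈ G.verts, G.mult u v
def inDeg (G : DG) (v : ℕ) : ℕ := ∑ u ∈ G.verts, G.mult u v

/-- `G.Reaches u v` : `u` is an ancestor of `v` (possibly `u = v`). -/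
def Reaches (G : DG) : ℕ → ℕ → Prop := Relation.ReflTransGen G.Adj
/-- `G.SReaches u v` : `u` is a strict ancestor of `v` (in an acyclic graph). -/
def SReaches (G : DG) : ℕ → ℕ → Prop := Relation.TransGen G.Adj
def Acyclic (G : DG) : Prop := ∀ v, ¬ G.SReaches v v

def IsRoot (G : DG) (v : ℕ) : Prop := v ∈ G.verts ∧ G.inDeg v = 0 ∧ G.outDeg v = 1
def IsLeafNode (G : DG) (v : ℕ) : Prop := v ∈ G.verts ∧ G.inDeg v = 1 ∧ G.outDeg v = 0
def IsTreeNode (G : DG) (v : ℕ) : Prop := v ∈ G.verts ∧ G.inDeg v = 1 ∧ G.outDeg v = 2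
def IsRetic (G : DG) (v : ℕ) : Prop := v ∈ G.verts ∧ G.inDeg v = 2 ∧ G.outDeg v = 1
def IsDupNode (G : DG) (v : ℕ) : Prop := v ∈ G.verts ∧ G.inDeg v = 1 ∧ G.outDeg v = 1

/-- The reticulation number: the number of reticulation nodes. -/
def reticNum (G : DG) : ℕ := (G.verts.filter (fun v => G.inDeg v = 2 ∧ G.outDeg v = 1)).card
/-- The duplication number: the number of duplication nodes. -/
def dupNum (G : DG) : ℕ := (G.verts.filter (fun v => G.inDeg v = 1 ∧ G.outDeg v = 1)).card
/-- The number of beads (counted by their bottom nodes). -/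
noncomputable def beadNum (G : DG) : ℕ :=
  (G.verts.filter (fun v => ∃ u ∈ G.verts, G.mult u v = 2)).card

def Supported (G : DG) : Prop := ∀ u v, G.Adj u v → u ∈ G.verts ∧ v ∈ G.verts
/-- Exactly the leaves carry labels. -/
def LabelsOnLeaves (G : DG) : Prop := ∀ v, (∃ x, G.label v = some x) ↔ G.IsLeafNode v

/-- The number of leaves (= labelled nodes). -/
def numLeaves (G : DG) : ℕ := (G.verts.filter (fun v => (G.label v).isSome)).card

/-- A multi-labelled tree (MUL-tree) with labels contained in `X`. -/
structure IsMulTree (X : Finset ℕ) (G : DG) : Prop where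
  root : ∃! r, G.IsRoot r
  nodes : ∀ v ∈ G.verts, G.IsRoot v ∨ G.IsTreeNode v ∨ G.IsLeafNode v
  acyclic : G.Acyclic
  simple : ∀ u v, G.mult u v ≤ 1
  supported : G.Supported
  labels : G.LabelsOnLeaves
  labelsSub : ∀ v x, G.label v = some x → x ∈ X

/-- A rooted binary phylogenetic network on `X` (parallel edges allowed). -/
structure IsNetwork (X : Finset ℕ) (G : DG) : Prop where
  root : ∃! r, G.IsRoot r
  nodes : ∀ v ∈ G.verts, G.IsRoot v ∨ G.IsTreeNode v ∨ G.IsRetic v ∨ G.IsLeafNode v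
  acyclic : G.Acyclic
  supported : G.Supported
  labels : G.LabelsOnLeaves
  labelsSub : ∀ v x, G.label v = some x → x ∈ X
  labelsOnto : ∀ x ∈ X, ∃! v, G.label v = some x

/-- A duplication tree on `X`. -/
structure IsDupTree (X : Finset ℕ) (G : DG) : Prop where
  root : ∃! r, G.IsRoot r
  nodes : ∀ v ∈ G.verts, G.IsRoot v ∨ G.IsTreeNode v ∨ G.IsDupNode v ∨ G.IsLeafNode v
  acyclic : G.Acyclic
  simple : ∀ u v, G.mult u v ≤ 1
  supported : G.Supported
  labels : G.LabelsOnLeaves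
  labelsSub : ∀ v x, G.label v = some x → x ∈ X
  labelsOnto : ∀ x ∈ X, ∃! v, G.label v = some x

/-- A beaded tree: a phylogenetic network in which every reticulation node is
the bottom node of a bead (a pair of parallel edges). -/
def IsBeadedTree (X : Finset ℕ) (G : DG) : Prop :=
  IsNetwork X G ∧ ∀ v ∈ G.verts, G.inDeg v = 2 → ∃ u, G.mult u v = 2

def ArcOK (G : DG) (e : Arc) : Prop := e.2.2 < G.mult e.1 e.2.1

/-- `G.IsWalk p a b` : `p` is a (nonempty) directed path of arcs from `a` to `b`. -/
def IsWalk (G : DG) (p : List Arc) (a b : ℕ) : Prop :=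
  p ≠ [] ∧ (∀ e ∈ p, G.ArcOK e) ∧
  List.Chain' (fun e f : Arc => e.2.1 = f.1) p ∧
  p.head?.map Prod.fst = some a ∧
  p.getLast?.map (fun e => e.2.1) = some b

/-- `v` is a node visited by the walk `p`. -/
def OnWalk (p : List Arc) (v : ℕ) : Prop := ∃ e ∈ p, e.1 = v ∨ e.2.1 = v

/-- A weak embedding of a MUL-tree `T` into a network `N`: nodes map to nodes,
edges map to directed paths and the two paths out of an internal node start
with different out-edges. -/
def WeakEmbedding (T N : DG) (h : ℕ → ℕ) (hE : ℕ → ℕ → List Arc) : Prop :=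
  (∀ v ∈ T.verts, h v ∈ N.verts) ∧
  (∀ v, T.IsLeafNode v → N.IsLeafNode (h v) ∧ N.label (h v) = T.label v) ∧
  (∀ u v, T.Adj u v → N.IsWalk (hE u v) (h u) (h v)) ∧
  (∀ x y y', T.Adj x y → T.Adj x y' → y ≠ y' → (hE x y).head? ≠ (hE x y').head?)

/-- `N.Displays T` : `N` weakly displays `T`. -/
def Displays (N T : DG) : Prop := ∃ h hE, WeakEmbedding T N h hE

/-- `x` is a least common ancestor of `y` and `z`. -/
def IsLCA (G : DG) (x y z : ℕ) : Prop :=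
  G.Reaches x y ∧ G.Reaches x z ∧
  ∀ w, G.SReaches x w → ¬ (G.Reaches w y ∧ G.Reaches w z)

/-- A duplication mapping from a MUL-tree `T` to a duplication tree `D`. -/
def DupMapping (T D : DG) (M : ℕ → ℕ) : Prop :=
  (∀ v, T.IsLeafNode v → D.IsLeafNode (M v) ∧ D.label (M v) = T.label v) ∧
  (∀ u v, T.Adj u v → D.SReaches (M u) (M v)) ∧
  (∀ u v v', T.Adj u v → T.Adj u v' → v ≠ v' →
    D.IsLCA (M u) (M v) (M v') ∨ D.IsDupNode (M u))

/-- `D.ConsistentWith T` : there is a duplication mapping from `T` to `D`. -/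
def ConsistentWith (D T : DG) : Prop := ∃ M, DupMapping T D M

/-- A solution to Beaded Tree on `𝒯`: a beaded tree on `X` weakly displaying
every MUL-tree of `𝒯`. -/
def Solution (X : Finset ℕ) (Ts : Set DG) (B : DG) : Prop :=
  IsBeadedTree X B ∧ ∀ T ∈ Ts, B.Displays T

/-- An optimal solution: minimum reticulation number among all solutions. -/
def OptSolution (X : Finset ℕ) (Ts : Set DG) (B : DG) : Prop :=
  Solution X Ts B ∧ ∀ B', Solution X Ts B' → B.reticNum ≤ B'.reticNum

/-- Number of beads traversed by a walk. -/
def beadsOnWalk (G : DG) (p : List Arc) : ℕ :=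
  p.countP (fun e => decide (G.mult e.1 e.2.1 = 2))

/-- Number of duplication nodes traversed by a walk (as arc sources). -/
def dupsOnWalk (G : DG) (p : List Arc) : ℕ :=
  p.countP (fun e => decide (G.inDeg e.1 = 1 ∧ G.outDeg e.1 = 1))

/-- The bead depth: the maximum number of beads on any directed path. -/
noncomputable def beadDepth (G : DG) : ℕ :=
  sSup {n | ∃ p a b, G.IsWalk p a b ∧ G.beadsOnWalk p = n}

/-- A solution to Beaded Tree Depth of minimum bead depth. -/
def DepthOptSolution (X : Finset ℕ) (Ts : Set DG) (B : DG) : Prop :=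
  Solution X Ts B ∧ ∀ B', Solution X Ts B' → B.beadDepth ≤ B'.beadDepth

/-- The child of the root is the top node of a bead. -/
def HasBeadAtRoot (G : DG) : Prop :=
  ∃ r u v, G.IsRoot r ∧ G.Adj r u ∧ G.mult u v = 2

/-- `B` is obtained from `B'` by inserting a new bead `(u,v)` between the root
`r` of `B'` and its child `a`.  Equivalently, `B'` is obtained from `B` by
deleting `u` and `v` and adding an edge from the root to the child of `v`. -/
def AddBeadAtRoot (B' B : DG) : Prop :=
  ∃ r a u v, B'.IsRoot r ∧ B'.Adj r a ∧ u ∉ B'.verts ∧ v ∉ B'.verts ∧ u ≠ v ∧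
    B.verts = insert u (insert v B'.verts) ∧
    B.label = (fun w => if w = u ∨ w = v then none else B'.label w) ∧
    B.mult = (fun s t =>
      if s = r ∧ t = a then 0
      else if s = r ∧ t = u then 1
      else if s = u ∧ t = v then 2
      else if s = v ∧ t = a then 1
      else if s = u ∨ s = v ∨ t = u ∨ t = v then 0
      else B'.mult s t)

/-- `N` is obtained by joining `N1` and `N2`: the two roots are identified into
a single node `u`, which becomes the child of a new root `r`.  The embeddings
`f1`, `f2` realise the copies of `N1` and `N2` inside `N`. -/
def IsJoinOf (N N1 N2 : DG) : Prop :=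
  ∃ (f1 f2 : ℕ → ℕ) (r u : ℕ),
    N.IsRoot r ∧ u ∈ N.verts ∧ N.mult r u = 1 ∧
    Set.InjOn f1 N1.verts ∧ Set.InjOn f2 N2.verts ∧
    (∀ v, N1.IsRoot v → f1 v = u) ∧ (∀ v, N2.IsRoot v → f2 v = u) ∧
    (∀ w, w ∈ N.verts ↔ (w = r ∨ (∃ v ∈ N1.verts, f1 v = w) ∨ (∃ v ∈ N2.verts, f2 v = w))) ∧
    (∀ v1 ∈ N1.verts, ∀ v2 ∈ N2.verts, f1 v1 = f2 v2 → N1.IsRoot v1 ∧ N2.IsRoot v2) ∧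
    (∀ v ∈ N1.verts, f1 v ≠ r) ∧ (∀ v ∈ N2.verts, f2 v ≠ r) ∧
    (∀ a ∈ N1.verts, ∀ b ∈ N1.verts, N.mult (f1 a) (f1 b) = N1.mult a b) ∧
    (∀ a ∈ N2.verts, ∀ b ∈ N2.verts, N.mult (f2 a) (f2 b) = N2.mult a b) ∧
    (∀ a b, N.Adj a b →
      (a = r ∧ b = u) ∨
      (∃ a' ∈ N1.verts, ∃ b' ∈ N1.verts, f1 a' = a ∧ f1 b' = b ∧ N1.Adj a' b') ∨
      (∃ a' ∈ N2.verts, ∃ b' ∈ N2.verts, f2 a' = a ∧ f2 b' = b ∧ N2.Adj a' b')) ∧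
    (∀ v ∈ N1.verts, N.label (f1 v) = N1.label v) ∧
    (∀ v ∈ N2.verts, N.label (f2 v) = N2.label v) ∧
    N.label r = none

/-- Delete a node and all incident edges. -/
def deleteNode (G : DG) (v : ℕ) : DG where
  verts := G.verts.erase v
  mult := fun a b => if a = v ∨ b = v then 0 else G.mult a b
  label := fun a => if a = v then none else G.label a

/-- Suppress an in-degree-1 out-degree-1 node `v` with parent `p` and child `c`. -/
def suppressNode (G : DG) (v p c : ℕ) : DG where
  verts := G.verts.erase v
  mult := fun a b =>
    if a = v ∨ b = v then 0
    else if a = p ∧ b = c then G.mult a b + 1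
    else G.mult a b
  label := fun a => if a = v then none else G.label a

/-- One step of the restriction procedure for label set `S`: delete a leaf
labelled in `S` or an unlabelled node of out-degree 0, or suppress an
unlabelled node of in-degree 1 and out-degree 1. -/
inductive RStep (S : Finset ℕ) : DG → DG → Prop
  | del (G : DG) (v : ℕ) : v ∈ G.verts →
      ((∃ x ∈ S, G.label v = some x) ∨ (G.label v = none ∧ G.outDeg v = 0)) →
      RStep S G (G.deleteNode v)
  | suppress (G : DG) (v p c : ℕ) : v ∈ G.verts → G.label v = none →
      G.mult p v = 1 → G.inDeg v = 1 → G.mult v c = 1 → G.outDeg v = 1 →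
      RStep S G (G.suppressNode v p c)

/-- `Restricts S G G'` : `G' = G ∖ S`, i.e. `G'` is obtained from `G` by
deleting all leaves labelled in `S` and exhaustively deleting unlabelled nodes
of out-degree 0 and suppressing in-degree-1 out-degree-1 nodes. -/
def Restricts (S : Finset ℕ) (G G' : DG) : Prop :=
  Relation.ReflTransGen (RStep S) G G' ∧ ∀ H, ¬ RStep S G' H

/-- `𝒯 ∖ S` for a set of MUL-trees (empty results discarded). -/
def SetRestrict (S : Finset ℕ) (Ts : Set DG) : Set DG :=
  {T' | T'.verts.Nonempty ∧ ∃ T ∈ Ts, Restricts S T T'}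

/-- The member of the depth-1 forest of `T` keeping `y` and discarding the
subtree rooted at `y'` (here `r` is the root, `x` its child, `y,y'` the
children of `x`, which is suppressed). -/
noncomputable def f1del (T : DG) (r x y y' : ℕ) : DG where
  verts := (T.verts.filter (fun v => ¬ T.Reaches y' v)).erase x
  mult := fun a b =>
    if a = r ∧ b = y then 1
    else if a = x ∨ b = x ∨ T.Reaches y' a ∨ T.Reaches y' b then 0
    else T.mult a b
  label := fun v => if v = x ∨ T.Reaches y' v then none else T.label v

/-- `T'` is one of the two members of the depth-1 forest `F1(T)`. -/
def InF1 (T T' : DG) : Prop :=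
  ∃ r x y y', T.IsRoot r ∧ T.Adj r x ∧ T.Adj x y ∧ T.Adj x y' ∧ y ≠ y' ∧
    T' = f1del T r x y y'

/-- `F1(𝒯)`. -/
def F1Set (Ts : Set DG) : Set DG := {T' | ∃ T ∈ Ts, InF1 T T'}

/-- Two species labels occur in the same member of `F1(𝒯)`. -/
def SplitRel (Ts : Set DG) (a b : ℕ) : Prop :=
  ∃ T' ∈ F1Set Ts, (∃ u, T'.label u = some a) ∧ (∃ v, T'.label v = some b)

/-- `S` is one of the classes of the split partition of `X` for `𝒯`. -/
def SplitPart (X : Finset ℕ) (Ts : Set DG) (S : Finset ℕ) : Prop :=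
  ∃ a ∈ X, S = X.filter (fun b => Relation.EqvGen (SplitRel Ts) a b)

end DG

/-!
The embedding of `T` into `B` sends the root `r` to the root `ρ` of `B`, the edge `r x` to the
arc `ρ u`, and the subtrees of `T` below `y` and `y'` exactly as the given weak embeddings of
`T_l` and `T_r` into `B'` do. The edges `x y` and `x y'` leave `u` through the two different
parallel arcs of the bead and continue along `v a` and a path of `B'` from `a` to the image of
`y` (resp. `y'`); such a path exists because the root of `B'` reaches every node and has `a` as
its only child. Nothing else changes: the images of the subtrees avoid the root of `B'`, so they
never use the deleted arc `ρ a`, and `B` has the same degrees and labels as `B'` on the nodes of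
`B'`, so leaves stay leaves.
-/

namespace DG

section Graph

variable {G : DG}

theorem not_reaches_of_adj (hG : G.Acyclic) {a b : ℕ} (h : G.Adj a b) : ¬G.Reaches b a :=
  fun hba => hG a (Relation.TransGen.head' h hba)

theorem not_adj_of_inDeg_eq_zero (hG : G.Supported) {v : ℕ} (hv : G.inDeg v = 0) (w : ℕ) :
    ¬G.Adj w v :=
  fun h => h.ne' (Finset.sum_eq_zero_iff.mp hv w (hG w v h).1)

theorem ne_of_reaches_of_adj (hG : G.Acyclic) {a b w : ℕ} (h : G.Adj a b) (hw : G.Reaches b w) :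
    w ≠ a := by
  rintro rfl
  exact not_reaches_of_adj hG h hw

theorem eq_of_reaches_of_inDeg_eq_zero (hG : G.Supported) {v w : ℕ} (hv : G.inDeg v = 0)
    (h : G.Reaches w v) : w = v := by
  rcases h.cases_tail with h | ⟨c, -, hc⟩
  · exact h.symm
  · exact absurd hc (not_adj_of_inDeg_eq_zero hG hv c)

theorem mult_le_outDeg {u v : ℕ} (hv : v ∈ G.verts) : G.mult u v ≤ G.outDeg u :=
  Finset.single_le_sum (fun _ _ => Nat.zero_le _) hv

theorem eq_of_adj_of_outDeg_eq_one (hG : G.Supported) {u a b : ℕ} (hu : G.outDeg u = 1)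
    (ha : G.Adj u a) (hb : G.Adj u b) : a = b := by
  by_contra hab
  have : G.mult u a + G.mult u b ≤ G.outDeg u := by
    rw [← Finset.sum_pair hab]
    exact Finset.sum_le_sum_of_subset
      (by simp [Finset.insert_subset_iff, (hG u a ha).2, (hG u b hb).2])
  unfold Adj at ha hb
  omega

theorem eq_of_adj_of_inDeg_eq_one (hG : G.Supported) {v a b : ℕ} (hv : G.inDeg v = 1)
    (ha : G.Adj a v) (hb : G.Adj b v) : a = b := by
  by_contra hab
  have : G.mult a v + G.mult b v ≤ G.inDeg v := by
    rw [← Finset.sum_pair (f := fun t => G.mult t v) hab]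
    exact Finset.sum_le_sum_of_subset
      (by simp [Finset.insert_subset_iff, (hG a v ha).1, (hG b v hb).1])
  unfold Adj at ha hb
  omega

theorem eq_or_eq_of_adj_of_outDeg_eq_two (hG : G.Supported) {u a b c : ℕ} (hu : G.outDeg u = 2)
    (ha : G.Adj u a) (hb : G.Adj u b) (hab : a ≠ b) (hc : G.Adj u c) : c = a ∨ c = b := by
  by_contra! hcab
  have : G.mult u c + (G.mult u a + G.mult u b) ≤ G.outDeg u := by
    rw [← Finset.sum_pair hab, ← Finset.sum_insert (by simp [hcab.1, hcab.2])]
    exact Finset.sum_le_sum_of_subset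
      (by simp [Finset.insert_subset_iff, (hG u a ha).2, (hG u b hb).2, (hG u c hc).2])
  unfold Adj at ha hb hc
  omega

theorem reaches_of_inDeg_pos (hG : G.Supported) (hacy : G.Acyclic) {r : ℕ}
    (hpos : ∀ v ∈ G.verts, v ≠ r → 0 < G.inDeg v) {v : ℕ} (hv : v ∈ G.verts) :
    G.Reaches r v := by
  by_cases hvr : v = r
  · exact hvr ▸ Relation.ReflTransGen.refl
  obtain ⟨p, hp, hpv⟩ := Finset.exists_lt_of_sum_lt (s := G.verts) (f := fun _ => 0)
    (by simpa [inDeg] using hpos v hv hvr)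
  have hlt : (G.verts.filter (G.SReaches · p)).card < (G.verts.filter (G.SReaches · v)).card := by
    refine Finset.card_lt_card ⟨fun w hw => ?_, fun hsub => ?_⟩
    · simp only [Finset.mem_filter] at hw ⊢
      exact ⟨hw.1, hw.2.tail hpv⟩
    · exact hacy p (Finset.mem_filter.mp (hsub (Finset.mem_filter.mpr ⟨hp, .single hpv⟩))).2
  exact (reaches_of_inDeg_pos hG hacy hpos hp).tail hpv
termination_by (G.verts.filter (G.SReaches · v)).card

end Graph

section Walk

variable {G : DG}

theorem isWalk_singleton {e : Arc} (he : G.ArcOK e) : G.IsWalk [e] e.1 e.2.1 :=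
  ⟨List.cons_ne_nil _ _, by simpa using he, List.isChain_singleton e, rfl, rfl⟩

theorem IsWalk.cons {e : Arc} {p : List Arc} {t : ℕ} (he : G.ArcOK e) (hp : G.IsWalk p e.2.1 t) :
    G.IsWalk (e :: p) e.1 t := by
  obtain ⟨hne, harcs, hchain, hhead, hlast⟩ := hp
  obtain ⟨f, q, rfl⟩ := List.exists_cons_of_ne_nil hne
  simp only [List.head?_cons, Option.map_some, Option.some.injEq] at hhead
  refine ⟨List.cons_ne_nil _ _, ?_, List.IsChain.cons_cons hhead.symm hchain, rfl, ?_⟩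
  · simpa [he] using harcs
  · rwa [List.getLast?_cons_cons]

theorem IsWalk.of_arcOK {H : DG} {p : List Arc} {s t : ℕ} (hp : G.IsWalk p s t)
    (h : ∀ e ∈ p, H.ArcOK e) : H.IsWalk p s t :=
  ⟨hp.1, h, hp.2.2⟩

theorem IsWalk.adj {p : List Arc} {s t : ℕ} (hp : G.IsWalk p s t) {e : Arc} (he : e ∈ p) :
    G.Adj e.1 e.2.1 :=
  (Nat.zero_le _).trans_lt (hp.2.1 e he)

theorem IsWalk.ne_of_inDeg_eq_zero (hG : G.Supported) {v : ℕ} (hv : G.inDeg v = 0)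
    {p : List Arc} {s t : ℕ} (hp : G.IsWalk p s t) : t ≠ v := by
  have hlast := hp.2.2.2.2
  rw [List.getLast?_eq_some_getLast hp.1, Option.map_some, Option.some.injEq] at hlast
  rintro rfl
  exact not_adj_of_inDeg_eq_zero hG hv _ (hlast ▸ hp.adj (List.getLast_mem hp.1))

theorem IsWalk.fst_ne_of_inDeg_eq_zero (hG : G.Supported) {v : ℕ} (hv : G.inDeg v = 0) :
    ∀ {p : List Arc} {s t : ℕ}, G.IsWalk p s t → s ≠ v → ∀ e ∈ p, e.1 ≠ v
  | [], _, _, hp, _ => absurd rfl hp.1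
  | [f], _, _, hp, hs => by
    obtain ⟨-, -, -, hhead, -⟩ := hp
    simp_all
  | f :: g :: q, s, t, hp, hs => by
    obtain ⟨-, harcs, hchain, hhead, hlast⟩ := id hp
    simp only [List.head?_cons, Option.map_some, Option.some.injEq] at hhead
    obtain ⟨hfg, hchain⟩ := List.isChain_cons_cons.mp hchain
    have htail : G.IsWalk (g :: q) f.2.1 t :=
      ⟨List.cons_ne_nil _ _, fun e he => harcs e (List.mem_cons_of_mem f he), hchain,
        by simp [hfg], by rwa [List.getLast?_cons_cons] at hlast⟩
    have hf : f.2.1 ≠ v := fun h =>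
      not_adj_of_inDeg_eq_zero hG hv f.1 (h ▸ hp.adj List.mem_cons_self)
    rintro e (_ | ⟨_, he⟩)
    · exact hhead ▸ hs
    · exact fst_ne_of_inDeg_eq_zero hG hv htail hf e he

theorem exists_isWalk_of_reaches {b t : ℕ} (h : G.Reaches b t) {e : Arc} (he : G.ArcOK e)
    (heb : e.2.1 = b) : ∃ p, G.IsWalk p e.1 t ∧ p.head? = some e := by
  induction h using Relation.ReflTransGen.head_induction_on generalizing e with
  | refl => exact ⟨[e], heb ▸ isWalk_singleton he, rfl⟩
  | @head b c hbc _ ih =>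
    obtain ⟨p, hp, -⟩ := ih (e := (b, c, 0)) hbc rfl
    exact ⟨e :: p, IsWalk.cons he (heb ▸ hp), rfl⟩

end Walk

section Tree

variable {X : Finset ℕ} {T : DG}

theorem IsMulTree.eq_of_adj (hT : T.IsMulTree X) {p q c : ℕ} (hp : T.Adj p c) (hq : T.Adj q c) :
    p = q := by
  rcases hT.nodes c (hT.supported p c hp).2 with hc | hc | hc
  · exact absurd hp (not_adj_of_inDeg_eq_zero hT.supported hc.2.1 p)
  · exact eq_of_adj_of_inDeg_eq_one hT.supported hc.2.1 hp hq
  · exact eq_of_adj_of_inDeg_eq_one hT.supported hc.2.1 hp hq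

theorem IsMulTree.reaches_of_isRoot (hT : T.IsMulTree X) {r v : ℕ} (hr : T.IsRoot r)
    (hv : v ∈ T.verts) : T.Reaches r v := by
  refine reaches_of_inDeg_pos hT.supported hT.acyclic (fun w hw hwr => ?_) hv
  rcases hT.nodes w hw with hw' | hw' | hw'
  · exact absurd (hT.root.unique hw' hr) hwr
  · rw [hw'.2.1]; exact one_pos
  · rw [hw'.2.1]; exact one_pos

theorem IsNetwork.reaches_of_isRoot {N : DG} (hN : N.IsNetwork X) {r v : ℕ} (hr : N.IsRoot r)
    (hv : v ∈ N.verts) : N.Reaches r v := by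
  refine reaches_of_inDeg_pos hN.supported hN.acyclic (fun w hw hwr => ?_) hv
  rcases hN.nodes w hw with hw' | hw' | hw' | hw'
  · exact absurd (hN.root.unique hw' hr) hwr
  all_goals rw [hw'.2.1]; norm_num

theorem IsMulTree.reaches_total (hT : T.IsMulTree X) {p q w : ℕ} (hp : T.Reaches p w)
    (hq : T.Reaches q w) : T.Reaches p q ∨ T.Reaches q p := by
  induction hp generalizing q with
  | refl => exact .inr hq
  | @tail b c hpb hbc ih =>
    rcases hq.cases_tail with rfl | ⟨d, hqd, hdc⟩
    · exact .inl (hpb.tail hbc)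
    · exact ih (hT.eq_of_adj hdc hbc ▸ hqd)

theorem IsMulTree.not_reaches_sibling (hT : T.IsMulTree X) {x y y' : ℕ} (hxy : T.Adj x y)
    (hxy' : T.Adj x y') (hne : y ≠ y') : ¬T.Reaches y y' := by
  intro h
  rcases h.cases_tail with h | ⟨d, hyd, hdy'⟩
  · exact hne h.symm
  · exact not_reaches_of_adj hT.acyclic hxy (hT.eq_of_adj hdy' hxy' ▸ hyd)

theorem IsMulTree.not_reaches_of_reaches_sibling (hT : T.IsMulTree X) {x y y' w : ℕ}
    (hxy : T.Adj x y) (hxy' : T.Adj x y') (hne : y ≠ y') (hw : T.Reaches y w) :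
    ¬T.Reaches y' w := fun hw' =>
  (hT.reaches_total hw hw').elim (hT.not_reaches_sibling hxy hxy' hne)
    (hT.not_reaches_sibling hxy' hxy hne.symm)

theorem IsMulTree.eq_or_eq_of_adj (hT : T.IsMulTree X) {x y y' c : ℕ} (hxy : T.Adj x y)
    (hxy' : T.Adj x y') (hne : y ≠ y') (hc : T.Adj x c) : c = y ∨ c = y' := by
  have hG := hT.supported
  rcases hT.nodes x (hG x y hxy).1 with hx | hx | hx
  · exact absurd (eq_of_adj_of_outDeg_eq_one hG hx.2.2 hxy hxy') hne
  · exact eq_or_eq_of_adj_of_outDeg_eq_two hG hx.2.2 hxy hxy' hne hc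
  · exact absurd hx.2.2 (hxy.trans_le (mult_le_outDeg (hG x y hxy).2)).ne'

theorem IsMulTree.reaches_cases (hT : T.IsMulTree X) {x y y' w : ℕ} (hxy : T.Adj x y)
    (hxy' : T.Adj x y') (hne : y ≠ y') (hw : T.Reaches x w) :
    w = x ∨ T.Reaches y w ∨ T.Reaches y' w := by
  rcases hw.cases_head with h | ⟨d, hxd, hdw⟩
  · exact .inl h.symm
  rcases hT.eq_or_eq_of_adj hxy hxy' hne hxd with rfl | rfl
  exacts [.inr (.inl hdw), .inr (.inr hdw)]

end Tree

section DepthOneForest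

variable {X : Finset ℕ} {T : DG} {r x y y' w : ℕ}

theorem f1del_verts_subset : (f1del T r x y y').verts ⊆ T.verts :=
  (Finset.erase_subset _ _).trans (Finset.filter_subset _ _)

theorem f1del_adj_root : (f1del T r x y y').Adj r y := by
  simp [Adj, f1del]

theorem mem_f1del_verts_of_reaches (hT : T.IsMulTree X) (hxy : T.Adj x y) (hxy' : T.Adj x y')
    (hne : y ≠ y') (hw : w ∈ T.verts) (hyw : T.Reaches y w) :
    w ∈ (f1del T r x y y').verts := by
  simp [f1del, hw, ne_of_reaches_of_adj hT.acyclic hxy hyw,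
    hT.not_reaches_of_reaches_sibling hxy hxy' hne hyw]

theorem f1del_label_of_reaches (hT : T.IsMulTree X) (hxy : T.Adj x y) (hxy' : T.Adj x y')
    (hne : y ≠ y') (hyw : T.Reaches y w) : (f1del T r x y y').label w = T.label w := by
  simp [f1del, ne_of_reaches_of_adj hT.acyclic hxy hyw,
    hT.not_reaches_of_reaches_sibling hxy hxy' hne hyw]

theorem f1del_mult_of_reaches (hT : T.IsMulTree X) (hrx : T.Adj r x) (hxy : T.Adj x y)
    (hxy' : T.Adj x y') (hne : y ≠ y') (hw : T.Reaches y w) (c : ℕ) :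
    (f1del T r x y y').mult w c = T.mult w c := by
  have hwr := ne_of_reaches_of_adj hT.acyclic hrx (.head hxy hw)
  have hwx := ne_of_reaches_of_adj hT.acyclic hxy hw
  have hwy' := hT.not_reaches_of_reaches_sibling hxy hxy' hne hw
  by_cases hc : T.Adj w c
  · have hcx : c ≠ x := by rintro rfl; exact hwr (hT.eq_of_adj hc hrx)
    have hcy' := hT.not_reaches_of_reaches_sibling hxy hxy' hne (hw.tail hc)
    simp [f1del, hwr, hwx, hwy', hcx, hcy']
  · rw [Nat.eq_zero_of_not_pos hc]
    simp only [f1del]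
    split_ifs with h
    exacts [absurd h.1 hwr, rfl, Nat.eq_zero_of_not_pos hc]

theorem f1del_mult_swap (hT : T.IsMulTree X) (hr : T.IsRoot r) (hrx : T.Adj r x)
    (hxy : T.Adj x y) (hxy' : T.Adj x y') (hne : y ≠ y') (hw : T.Reaches y w) (t : ℕ) :
    (f1del T r x y y').mult t w = T.mult (Equiv.swap r x t) w := by
  have hrx' := (ne_of_reaches_of_adj hT.acyclic hrx .refl).symm
  have hwx := ne_of_reaches_of_adj hT.acyclic hxy hw
  have hwy' := hT.not_reaches_of_reaches_sibling hxy hxy' hne hw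
  have hy'r : ¬T.Reaches y' r := fun h => not_reaches_of_adj hT.acyclic hxy' (h.tail hrx)
  have hrw : T.mult r w = 0 := Nat.eq_zero_of_not_pos fun h =>
    hwx (eq_of_adj_of_outDeg_eq_one hT.supported hr.2.2 h hrx)
  rcases eq_or_ne t r with rfl | htr
  · rw [Equiv.swap_apply_left]
    simp only [f1del, hrx', hwx, hwy', hy'r, true_and, or_false, if_false, hrw]
    split_ifs with hwy
    · subst hwy
      exact (le_antisymm (hT.simple x w) hxy).symm
    · exact (Nat.eq_zero_of_not_pos fun h =>
        (hT.eq_or_eq_of_adj hxy hxy' hne h).elim hwy (fun h' => hwy' (h' ▸ .refl))).symm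
  rcases eq_or_ne t x with rfl | htx
  · simp [f1del, htr, hrw]
  rw [Equiv.swap_apply_of_ne_of_ne htr htx]
  simp only [f1del, htr, htx, hwx, hwy', false_and, false_or, or_false, if_false]
  split_ifs with hy't
  · exact (Nat.eq_zero_of_not_pos fun h => hwy' (hy't.tail h)).symm
  · rfl

theorem f1del_inDeg_of_reaches (hT : T.IsMulTree X) (hr : T.IsRoot r) (hrx : T.Adj r x)
    (hxy : T.Adj x y) (hxy' : T.Adj x y') (hne : y ≠ y') (hw : T.Reaches y w) :
    (f1del T r x y y').inDeg w = T.inDeg w := by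
  have hrx' := (ne_of_reaches_of_adj hT.acyclic hrx .refl).symm
  have hy'r : ¬T.Reaches y' r := fun h => not_reaches_of_adj hT.acyclic hxy' (h.tail hrx)
  calc (f1del T r x y y').inDeg w = ∑ t ∈ T.verts, (f1del T r x y y').mult t w := by
        refine Finset.sum_subset f1del_verts_subset fun t ht htl => ?_
        have htr : t ≠ r := by rintro rfl; exact htl (by simp [f1del, hr.1, hrx', hy'r])
        simp only [f1del, Finset.mem_erase, Finset.mem_filter, ht, true_and, not_and,
          not_not] at htl
        simp only [f1del, htr, false_and, if_false]
        rw [if_pos (by tauto)]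
    _ = ∑ t ∈ T.verts, T.mult (Equiv.swap r x t) w :=
        Finset.sum_congr rfl fun t _ => f1del_mult_swap hT hr hrx hxy hxy' hne hw t
    _ = T.inDeg w := by
        refine Equiv.Perm.sum_comp _ _ (T.mult · w) fun t ht => ?_
        obtain ⟨-, rfl | rfl⟩ := Equiv.swap_apply_ne_self_iff.mp ht
        exacts [hr.1, (hT.supported r t hrx).2]

theorem f1del_outDeg_le (hT : T.IsMulTree X) (hrx : T.Adj r x) (hxy : T.Adj x y)
    (hxy' : T.Adj x y') (hne : y ≠ y') (hw : T.Reaches y w) :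
    (f1del T r x y y').outDeg w ≤ T.outDeg w :=
  calc (f1del T r x y y').outDeg w = ∑ t ∈ (f1del T r x y y').verts, T.mult w t :=
        Finset.sum_congr rfl fun t _ => f1del_mult_of_reaches hT hrx hxy hxy' hne hw t
    _ ≤ T.outDeg w := Finset.sum_le_sum_of_subset f1del_verts_subset

theorem isLeafNode_f1del (hT : T.IsMulTree X) (hr : T.IsRoot r) (hrx : T.Adj r x)
    (hxy : T.Adj x y) (hxy' : T.Adj x y') (hne : y ≠ y') (hw : T.Reaches y w)
    (hl : T.IsLeafNode w) : (f1del T r x y y').IsLeafNode w :=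
  ⟨mem_f1del_verts_of_reaches hT hxy hxy' hne hl.1 hw,
    (f1del_inDeg_of_reaches hT hr hrx hxy hxy' hne hw).trans hl.2.1,
    Nat.le_zero.mp ((f1del_outDeg_le hT hrx hxy hxy' hne hw).trans hl.2.2.le)⟩

end DepthOneForest

/-- The conditions of `WeakEmbedding`, imposed only on the subtree of `T` rooted at `y`. -/
structure SubtreeEmbedding (T N : DG) (y : ℕ) (h : ℕ → ℕ) (E : ℕ → ℕ → List Arc) :
    Prop where
  mem : ∀ w ∈ T.verts, T.Reaches y w → h w ∈ N.verts
  isLeafNode : ∀ w, T.Reaches y w → T.IsLeafNode w →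
    N.IsLeafNode (h w) ∧ N.label (h w) = T.label w
  isWalk : ∀ w c, T.Reaches y w → T.Adj w c → N.IsWalk (E w c) (h w) (h c)
  head_ne : ∀ w c c', T.Reaches y w → T.Adj w c → T.Adj w c' → c ≠ c' →
    (E w c).head? ≠ (E w c').head?

section Gluing

variable {X : Finset ℕ} {T N : DG} {r x y y' : ℕ} {h : ℕ → ℕ}
  {E : ℕ → ℕ → List Arc}

theorem WeakEmbedding.subtreeEmbedding_f1del (hT : T.IsMulTree X) (hr : T.IsRoot r)
    (hrx : T.Adj r x) (hxy : T.Adj x y) (hxy' : T.Adj x y') (hne : y ≠ y')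
    (he : WeakEmbedding (f1del T r x y y') N h E) : SubtreeEmbedding T N y h E := by
  have hadj {w c : ℕ} (hw : T.Reaches y w) (hc : T.Adj w c) : (f1del T r x y y').Adj w c := by
    rwa [Adj, f1del_mult_of_reaches hT hrx hxy hxy' hne hw]
  refine ⟨fun w hw hyw => he.1 w (mem_f1del_verts_of_reaches hT hxy hxy' hne hw hyw),
    fun w hyw hl => ?_, fun w c hw hc => he.2.2.1 w c (hadj hw hc),
    fun w c c' hw hc hc' => he.2.2.2 w c c' (hadj hw hc) (hadj hw hc')⟩
  rw [← f1del_label_of_reaches hT hxy hxy' hne hyw]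
  exact he.2.1 w (isLeafNode_f1del hT hr hrx hxy hxy' hne hyw hl)

theorem SubtreeEmbedding.glue (hT : T.IsMulTree X) (hxy : T.Adj x y) (hxy' : T.Adj x y')
    (hne : y ≠ y') {h₁ h₂ : ℕ → ℕ} {E₁ E₂ : ℕ → ℕ → List Arc}
    (e₁ : SubtreeEmbedding T N y h₁ E₁) (e₂ : SubtreeEmbedding T N y' h₂ E₂) {μ : ℕ}
    (hμ : μ ∈ N.verts) {P P' : List Arc} (hP : N.IsWalk P μ (h₁ y))
    (hP' : N.IsWalk P' μ (h₂ y')) (hPP' : P.head? ≠ P'.head?) :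
    ∃ h E, h x = μ ∧ SubtreeEmbedding T N x h E := by
  have below₁ {w : ℕ} (hw : T.Reaches y w) : w ≠ x := ne_of_reaches_of_adj hT.acyclic hxy hw
  have below₂ {w : ℕ} (hw : T.Reaches y' w) : w ≠ x ∧ ¬T.Reaches y w :=
    ⟨ne_of_reaches_of_adj hT.acyclic hxy' hw,
      hT.not_reaches_of_reaches_sibling hxy' hxy hne.symm hw⟩
  have cases {w : ℕ} (hw : T.Reaches x w) := hT.reaches_cases hxy hxy' hne hw
  refine ⟨fun w => if w = x then μ else if T.Reaches y w then h₁ w else h₂ w,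
    fun w c => if w = x then (if c = y then P else P')
      else if T.Reaches y w then E₁ w c else E₂ w c, by simp, ⟨fun w hw hxw => ?_,
    fun w hxw hl => ?_, fun w c hxw hc => ?_, fun w c c' hxw hc hc' hcc' => ?_⟩⟩
  · rcases cases hxw with rfl | hw₁ | hw₂
    · simpa using hμ
    · simpa [below₁ hw₁, hw₁] using e₁.mem w hw hw₁
    · simpa [below₂ hw₂] using e₂.mem w hw hw₂
  · rcases cases hxw with rfl | hw₁ | hw₂
    · exact absurd hl.2.2 (hxy.trans_le (mult_le_outDeg (hT.supported w y hxy).2)).ne'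
    · simpa [below₁ hw₁, hw₁] using e₁.isLeafNode w hw₁ hl
    · simpa [below₂ hw₂] using e₂.isLeafNode w hw₂ hl
  · rcases cases hxw with rfl | hw₁ | hw₂
    · rcases hT.eq_or_eq_of_adj hxy hxy' hne hc with rfl | rfl
      · simpa [below₁ .refl, show T.Reaches c c from .refl] using hP
      · simpa [hne.symm, below₂ .refl] using hP'
    · have hc₁ : T.Reaches y c := hw₁.tail hc
      simpa [below₁ hw₁, below₁ hc₁, hw₁, hc₁] using e₁.isWalk w c hw₁ hc
    · simpa [below₂ hw₂, below₂ (hw₂.tail hc)] using e₂.isWalk w c hw₂ hc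
  · rcases cases hxw with rfl | hw₁ | hw₂
    · rcases hT.eq_or_eq_of_adj hxy hxy' hne hc with rfl | rfl <;>
        rcases hT.eq_or_eq_of_adj hxy hxy' hne hc' with rfl | rfl
      · exact absurd rfl hcc'
      · simpa [hne.symm] using hPP'
      · simpa [hne.symm] using hPP'.symm
      · exact absurd rfl hcc'
    · simpa [below₁ hw₁, hw₁] using e₁.head_ne w c c' hw₁ hc hc' hcc'
    · simpa [below₂ hw₂] using e₂.head_ne w c c' hw₂ hc hc' hcc'

theorem SubtreeEmbedding.displays (hT : T.IsMulTree X) (hr : T.IsRoot r) (hrx : T.Adj r x)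
    (e : SubtreeEmbedding T N x h E) {ρ : ℕ} (hρ : ρ ∈ N.verts) {P₀ : List Arc}
    (hP₀ : N.IsWalk P₀ ρ (h x)) : N.Displays T := by
  have below {w : ℕ} (hw : T.Reaches x w) : w ≠ r := ne_of_reaches_of_adj hT.acyclic hrx hw
  have child {c : ℕ} (hc : T.Adj r c) : c = x :=
    eq_of_adj_of_outDeg_eq_one hT.supported hr.2.2 hc hrx
  have cases {w : ℕ} (hw : w ∈ T.verts) : w = r ∨ T.Reaches x w := by
    rcases (hT.reaches_of_isRoot hr hw).cases_head with h | ⟨c, hrc, hcw⟩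
    exacts [.inl h.symm, .inr (child hrc ▸ hcw)]
  refine ⟨fun w => if w = r then ρ else h w, fun w c => if w = r then P₀ else E w c,
    fun w hw => ?_, fun w hl => ?_, fun w c hc => ?_, fun w c c' hc hc' hcc' => ?_⟩
  · rcases cases hw with rfl | hxw
    · simpa using hρ
    · simpa [below hxw] using e.mem w hw hxw
  · rcases cases hl.1 with rfl | hxw
    · exact absurd hr.2.1 (by rw [hl.2.1]; exact one_ne_zero)
    · simpa [below hxw] using e.isLeafNode w hxw hl
  · rcases cases (hT.supported w c hc).1 with rfl | hxw
    · obtain rfl := child hc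
      simpa [below .refl] using hP₀
    · simpa [below hxw, below (hxw.tail hc)] using e.isWalk w c hxw hc
  · rcases cases (hT.supported w c hc).1 with rfl | hxw
    · exact absurd ((child hc).trans (child hc').symm) hcc'
    · simpa [below hxw] using e.head_ne w c c' hxw hc hc' hcc'

end Gluing

/-- `AddBeadAtRoot B' B` with its witnesses: `ρ` is the root of `B'`, `a` its child, and the new
bead is `(u, v)`. -/
structure IsBeadInsertion (B' B : DG) (ρ a u v : ℕ) : Prop where
  isRoot : B'.IsRoot ρ
  adj : B'.Adj ρ a
  u_not_mem : u ∉ B'.verts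
  v_not_mem : v ∉ B'.verts
  u_ne_v : u ≠ v
  verts_eq : B.verts = insert u (insert v B'.verts)
  label_eq : B.label = fun w => if w = u ∨ w = v then none else B'.label w
  mult_eq : B.mult = fun s t =>
    if s = ρ ∧ t = a then 0
    else if s = ρ ∧ t = u then 1
    else if s = u ∧ t = v then 2
    else if s = v ∧ t = a then 1
    else if s = u ∨ s = v ∨ t = u ∨ t = v then 0
    else B'.mult s t

theorem AddBeadAtRoot.exists_isBeadInsertion {B' B : DG} (h : AddBeadAtRoot B' B) :
    ∃ ρ a u v, IsBeadInsertion B' B ρ a u v :=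
  let ⟨ρ, a, u, v, h₁, h₂, h₃, h₄, h₅, h₆, h₇, h₈⟩ := h
  ⟨ρ, a, u, v, h₁, h₂, h₃, h₄, h₅, h₆, h₇, h₈⟩

namespace IsBeadInsertion

variable {B' B : DG} {ρ a u v : ℕ}

theorem mem_verts (hB : IsBeadInsertion B' B ρ a u v) {z : ℕ} (hz : z ∈ B'.verts) :
    z ∈ B.verts := by
  simp [hB.verts_eq, hz]

theorem u_mem_verts (hB : IsBeadInsertion B' B ρ a u v) : u ∈ B.verts := by
  simp [hB.verts_eq]

theorem mult_root_u (hB : IsBeadInsertion B' B ρ a u v) (hS : B'.Supported) : B.mult ρ u = 1 := by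
  have : u ≠ a := fun h => hB.u_not_mem (h ▸ (hS ρ a hB.adj).2)
  simp [hB.mult_eq, this]

theorem mult_u_v (hB : IsBeadInsertion B' B ρ a u v) : B.mult u v = 2 := by
  have : u ≠ ρ := fun h => hB.u_not_mem (h ▸ hB.isRoot.1)
  simp [hB.mult_eq, this]

theorem mult_v_a (hB : IsBeadInsertion B' B ρ a u v) : B.mult v a = 1 := by
  have : v ≠ ρ := fun h => hB.v_not_mem (h ▸ hB.isRoot.1)
  simp [hB.mult_eq, this, hB.u_ne_v.symm]

theorem mult_of_mem (hB : IsBeadInsertion B' B ρ a u v) {s t : ℕ} (hs : s ∈ B'.verts)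
    (ht : t ∈ B'.verts) (hst : ¬(s = ρ ∧ t = a)) : B.mult s t = B'.mult s t := by
  have hsu : s ≠ u := fun h => hB.u_not_mem (h ▸ hs)
  have hsv : s ≠ v := fun h => hB.v_not_mem (h ▸ hs)
  have htu : t ≠ u := fun h => hB.u_not_mem (h ▸ ht)
  have htv : t ≠ v := fun h => hB.v_not_mem (h ▸ ht)
  simp [hB.mult_eq, hst, hsu, hsv, htu, htv]

theorem mult_add_ite (hB : IsBeadInsertion B' B ρ a u v) {s t : ℕ}
    (hs : s ∈ B'.verts) (ht : t ∈ B'.verts) :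
    B.mult s t + (if s = ρ ∧ t = a then 1 else 0) = B'.mult s t := by
  by_cases hst : s = ρ ∧ t = a
  · obtain ⟨rfl, rfl⟩ := hst
    have h1 : B'.mult s t ≤ 1 := (mult_le_outDeg ht).trans_eq hB.isRoot.2.2
    have h2 : 0 < B'.mult s t := hB.adj
    simp [hB.mult_eq]
    omega
  · simp [hst, hB.mult_of_mem hs ht hst]

theorem inDeg_eq (hB : IsBeadInsertion B' B ρ a u v) {z : ℕ} (hz : z ∈ B'.verts) :
    B.inDeg z = B'.inDeg z := by
  have hzu : z ≠ u := fun h => hB.u_not_mem (h ▸ hz)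
  have hzv : z ≠ v := fun h => hB.v_not_mem (h ▸ hz)
  have huρ : u ≠ ρ := fun h => hB.u_not_mem (h ▸ hB.isRoot.1)
  have hvρ : v ≠ ρ := fun h => hB.v_not_mem (h ▸ hB.isRoot.1)
  have hu : u ∉ insert v B'.verts := by simp [hB.u_ne_v, hB.u_not_mem]
  calc B.inDeg z = B.mult u z + (B.mult v z + ∑ t ∈ B'.verts, B.mult t z) := by
        rw [inDeg, hB.verts_eq, Finset.sum_insert hu, Finset.sum_insert hB.v_not_mem]
    _ = ∑ t ∈ B'.verts, (B.mult t z + if t = ρ ∧ z = a then 1 else 0) := by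
        rw [Finset.sum_add_distrib]
        rcases eq_or_ne z a with rfl | hza
        · simp [hB.mult_eq, hzu, hzv, huρ, hvρ, hB.u_ne_v, hB.isRoot.1, add_comm]
        · simp [hB.mult_eq, hza, hzu, hzv, huρ, hvρ, hB.u_ne_v]
    _ = B'.inDeg z := Finset.sum_congr rfl fun t ht => hB.mult_add_ite ht hz

theorem outDeg_eq (hB : IsBeadInsertion B' B ρ a u v) (hS : B'.Supported) {z : ℕ}
    (hz : z ∈ B'.verts) : B.outDeg z = B'.outDeg z := by
  have hzu : z ≠ u := fun h => hB.u_not_mem (h ▸ hz)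
  have hzv : z ≠ v := fun h => hB.v_not_mem (h ▸ hz)
  have hua : u ≠ a := fun h => hB.u_not_mem (h ▸ (hS ρ a hB.adj).2)
  have hva : v ≠ a := fun h => hB.v_not_mem (h ▸ (hS ρ a hB.adj).2)
  have hu : u ∉ insert v B'.verts := by simp [hB.u_ne_v, hB.u_not_mem]
  calc B.outDeg z = B.mult z u + (B.mult z v + ∑ t ∈ B'.verts, B.mult z t) := by
        rw [outDeg, hB.verts_eq, Finset.sum_insert hu, Finset.sum_insert hB.v_not_mem]
    _ = ∑ t ∈ B'.verts, (B.mult z t + if z = ρ ∧ t = a then 1 else 0) := by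
        rw [Finset.sum_add_distrib]
        rcases eq_or_ne z ρ with rfl | hzρ
        · simp [hB.mult_eq, hzu, hzv, hua, hva, hB.u_ne_v.symm, (hS z a hB.adj).2, add_comm]
        · simp [hB.mult_eq, hzρ, hzu, hzv]
    _ = B'.outDeg z := Finset.sum_congr rfl fun t ht => hB.mult_add_ite hz ht

theorem isLeafNode (hB : IsBeadInsertion B' B ρ a u v) (hS : B'.Supported) {z : ℕ}
    (hz : B'.IsLeafNode z) : B.IsLeafNode z ∧ B.label z = B'.label z := by
  have hzu : z ≠ u := fun h => hB.u_not_mem (h ▸ hz.1)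
  have hzv : z ≠ v := fun h => hB.v_not_mem (h ▸ hz.1)
  refine ⟨⟨hB.mem_verts hz.1, (hB.inDeg_eq hz.1).trans hz.2.1,
    (hB.outDeg_eq hS hz.1).trans hz.2.2⟩, ?_⟩
  simp [hB.label_eq, hzu, hzv]

theorem adj_of_ne (hB : IsBeadInsertion B' B ρ a u v) (hS : B'.Supported) {s t : ℕ}
    (hst : B'.Adj s t) (hs : s ≠ ρ) : B.Adj s t := by
  rwa [Adj, hB.mult_of_mem (hS s t hst).1 (hS s t hst).2 (fun h => hs h.1)]

theorem isWalk (hB : IsBeadInsertion B' B ρ a u v) (hS : B'.Supported) {p : List Arc} {s t : ℕ}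
    (hp : B'.IsWalk p s t) (hs : s ≠ ρ) : B.IsWalk p s t := by
  refine hp.of_arcOK fun e he => ?_
  have hsrc := hp.fst_ne_of_inDeg_eq_zero hS hB.isRoot.2.1 hs e he
  have hadj := hp.adj he
  rw [ArcOK, hB.mult_of_mem (hS _ _ hadj).1 (hS _ _ hadj).2 (fun h => hsrc h.1)]
  exact hp.2.1 e he

theorem reaches_of_mem {X : Finset ℕ} (hB : IsBeadInsertion B' B ρ a u v)
    (hN : B'.IsNetwork X) {z : ℕ} (hz : z ∈ B'.verts) (hzρ : z ≠ ρ) : B.Reaches v z := by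
  have hS := hN.supported
  have hρ := hB.isRoot
  rcases (hN.reaches_of_isRoot hρ hz).cases_head with h | ⟨c, hρc, hcz⟩
  · exact absurd h.symm hzρ
  rw [eq_of_adj_of_outDeg_eq_one hS hρ.2.2 hρc hB.adj] at hcz
  have haρ := ne_of_reaches_of_adj hN.acyclic hB.adj .refl
  refine .head (hB.mult_v_a.symm ▸ one_pos) ?_
  clear hz hzρ
  induction hcz with
  | refl => exact .refl
  | @tail b c hab hbc ih =>
    refine ih.tail (hB.adj_of_ne hS hbc ?_)
    rintro rfl
    exact haρ (eq_of_reaches_of_inDeg_eq_zero hS hρ.2.1 hab)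

theorem subtreeEmbedding (hB : IsBeadInsertion B' B ρ a u v) (hS : B'.Supported) {T : DG}
    {y : ℕ} {h : ℕ → ℕ} {E : ℕ → ℕ → List Arc} (e : SubtreeEmbedding T B' y h E)
    (hy : h y ≠ ρ) : SubtreeEmbedding T B y h E := by
  have hne {w : ℕ} (hw : T.Reaches y w) : h w ≠ ρ := by
    rcases hw.cases_tail with rfl | ⟨p, hyp, hpw⟩
    · exact hy
    · exact (e.isWalk p w hyp hpw).ne_of_inDeg_eq_zero hS hB.isRoot.2.1
  refine ⟨fun w hw hyw => hB.mem_verts (e.mem w hw hyw), fun w hyw hl => ?_,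
    fun w c hw hc => hB.isWalk hS (e.isWalk w c hw hc) (hne hw), e.head_ne⟩
  obtain ⟨hl', hlab⟩ := e.isLeafNode w hyw hl
  exact ⟨(hB.isLeafNode hS hl').1, (hB.isLeafNode hS hl').2.trans hlab⟩

end IsBeadInsertion

end DG

theorem add_bead_displays_general (X XB : Finset ℕ) (T : DG)
    (hT : DG.IsMulTree X T)
    (r x y y' : ℕ) (hr : T.IsRoot r) (hrx : T.Adj r x)
    (hxy : T.Adj x y) (hxy' : T.Adj x y') (hne : y ≠ y')
    (B' B : DG) (hB' : DG.IsBeadedTree XB B')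
    (hdl : B'.Displays (DG.f1del T r x y y'))
    (hdr : B'.Displays (DG.f1del T r x y' y))
    (hbead : DG.AddBeadAtRoot B' B) :
    B.Displays T := by
  obtain ⟨ρ, a, u, v, hB⟩ := hbead.exists_isBeadInsertion
  obtain ⟨h₁, E₁, he₁⟩ := hdl
  obtain ⟨h₂, E₂, he₂⟩ := hdr
  have hN := hB'.1
  have hS := hN.supported
  have e₁ := he₁.subtreeEmbedding_f1del hT hr hrx hxy hxy' hne
  have e₂ := he₂.subtreeEmbedding_f1del hT hr hrx hxy' hxy hne.symm
  have hy₁ : h₁ y ≠ ρ :=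
    (he₁.2.2.1 r y DG.f1del_adj_root).ne_of_inDeg_eq_zero hS hB.isRoot.2.1
  have hy₂ : h₂ y' ≠ ρ :=
    (he₂.2.2.1 r y' DG.f1del_adj_root).ne_of_inDeg_eq_zero hS hB.isRoot.2.1
  obtain ⟨P, hP, hPhead⟩ := DG.exists_isWalk_of_reaches
    (hB.reaches_of_mem hN (e₁.mem y (hT.supported x y hxy).2 .refl) hy₁) (e := (u, v, 0))
    (by simp [DG.ArcOK, hB.mult_u_v]) rfl
  obtain ⟨P', hP', hP'head⟩ := DG.exists_isWalk_of_reaches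
    (hB.reaches_of_mem hN (e₂.mem y' (hT.supported x y' hxy').2 .refl) hy₂) (e := (u, v, 1))
    (by simp [DG.ArcOK, hB.mult_u_v]) rfl
  obtain ⟨f, F, hf, e⟩ := (hB.subtreeEmbedding hS e₁ hy₁).glue hT hxy hxy' hne
    (hB.subtreeEmbedding hS e₂ hy₂) hB.u_mem_verts hP hP' (by simp [hPhead, hP'head])
  refine e.displays hT hr hrx (hB.mem_verts hB.isRoot.1) (P₀ := [(ρ, u, 0)]) ?_
  rw [hf]
  exact DG.isWalk_singleton (by simp [DG.ArcOK, hB.mult_root_u hS])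

/-- Lemma 3, if-direction construction: if a beaded tree `B'`
weakly displays both members of the depth-1 forest of a MUL-tree `T`, then the
beaded tree obtained from `B'` by inserting a bead between its root and the
root's child weakly displays `T`. -/
theorem add_bead_displays (X XB : Finset ℕ) (T : DG)
    (hT : DG.IsMulTree X T) (hleaf : 1 < T.numLeaves)
    (r x y y' : ℕ) (hr : T.IsRoot r) (hrx : T.Adj r x)
    (hxy : T.Adj x y) (hxy' : T.Adj x y') (hne : y ≠ y')
    (B' B : DG) (hB' : DG.IsBeadedTree XB B')
    (hdl : B'.Displays (DG.f1del T r x y y'))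
    (hdr : B'.Displays (DG.f1del T r x y' y))
    (hbead : DG.AddBeadAtRoot B' B) :
    B.Displays T :=
  add_bead_displays_general X XB T hT r x y y' hr hrx hxy hxy' hne B' B hB' hdl hdr hbead
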